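/- arXiv:1611.06739 — 2 statements merged into one kernel-verified Lean document; each statement's English description precedes it below -/
import Mathlib

section
/- The confidence bound for the full set equals h: t({1,…,m}) = h. -/
open Finset

attribute [local instance] Classical.propDecidable

/-- The `i`-th smallest (1-indexed) element of the multiset of p-values `{p_j : j ∈ I}`. -/
noncomputable def pOrd {m : ℕ} (p : Fin m → ℝ) (I : Finset (Fin m)) (i : ℕ) : ℝ :=
  ((I.val.map p).sort (· ≤ ·)).getD (i - 1) 0

/-- The Simes local test rejects `H_I` (written `I ∈ 𝒰`) iff `I` is nonempty and
`|I|·p_{(i:I)} ≤ i·α` for at least one `1 ≤ i ≤ |I|`. -/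
def SimesU {m : ℕ} (α : ℝ) (p : Fin m → ℝ) (I : Finset (Fin m)) : Prop :=
  ∃ i, 1 ≤ i ∧ i ≤ I.card ∧ (I.card : ℝ) * pOrd p I i ≤ (i : ℝ) * α

/-- Closed testing rejects `H_I` (written `I ∈ 𝒳`) iff `J ∈ 𝒰` for every `J ⊇ I`. -/
def ClosedX {m : ℕ} (α : ℝ) (p : Fin m → ℝ) (I : Finset (Fin m)) : Prop :=
  ∀ J, I ⊆ J → SimesU α p J

/-- `K_i = {r_{m−i+1},…,r_m}`: the `i` indices with largest p-values. -/
def Kset {m : ℕ} (r : Fin m → Fin m) (i : ℕ) : Finset (Fin m) :=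
  (Finset.univ.filter fun j : Fin m => m - i ≤ (j : ℕ)).image r

/-- `L_i = {r_1,…,r_i}`: the `i` indices with smallest p-values. -/
def Lset {m : ℕ} (r : Fin m → Fin m) (i : ℕ) : Finset (Fin m) :=
  (Finset.univ.filter fun j : Fin m => (j : ℕ) < i).image r

/-- `h = max{0 ≤ i ≤ m : K_i ∉ 𝒰}`. -/
noncomputable def hval {m : ℕ} (α : ℝ) (p : Fin m → ℝ) (r : Fin m → Fin m) : ℕ :=
  sSup {i | i ≤ m ∧ ¬ SimesU α p (Kset r i)}

/-- `t(S) = max{|I| : I ⊆ S, I ∉ 𝒳}`. -/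
noncomputable def tval {m : ℕ} (α : ℝ) (p : Fin m → ℝ) (S : Finset (Fin m)) : ℕ :=
  sSup {k | ∃ I, I ⊆ S ∧ ¬ ClosedX α p I ∧ I.card = k}

/-- `d(S) = |S| − t(S)`. -/
noncomputable def dval {m : ℕ} (α : ℝ) (p : Fin m → ℝ) (S : Finset (Fin m)) : ℕ :=
  S.card - tval α p S

/-- `q_α(S) = t(S)/|S|` for nonempty `S`, and `0` for `S = ∅`. -/
noncomputable def qval {m : ℕ} (α : ℝ) (p : Fin m → ℝ) (S : Finset (Fin m)) : ℝ :=
  if S = ∅ then 0 else (tval α p S : ℝ) / S.card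

/-- `z = 0` if `h = m`, else `z = min{m−h ≤ i ≤ m : h·p_{(i)} ≤ (i−m+h+1)·α}`. -/
noncomputable def zval {m : ℕ} (α : ℝ) (p : Fin m → ℝ) (r : Fin m → Fin m) : ℕ :=
  if hval α p r = m then 0 else
    sInf {i | m - hval α p r ≤ i ∧ i ≤ m ∧
      (hval α p r : ℝ) * pOrd p Finset.univ i ≤ ((i : ℝ) - m + hval α p r + 1) * α}

/-- `b_q = max{1 ≤ i ≤ m : m·p_{(i)} ≤ i·q}` (with `b_q = 0` if no such `i`). -/
noncomputable def bval {m : ℕ} (q : ℝ) (p : Fin m → ℝ) : ℕ :=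
  sSup {i | 1 ≤ i ∧ i ≤ m ∧ (m : ℝ) * pOrd p Finset.univ i ≤ (i : ℝ) * q}

/-!
Among index sets of a fixed size `s`, the set `K_s` of the `s` largest p-values has the
largest order statistics, hence is the hardest for the Simes test to reject: if some `J` with
`|J| = s` is not rejected, neither is `K_s`. So `h` is the largest size of a set not rejected by the
Simes test. As `I ∉ 𝒳` exactly when `I` lies in such a set, the largest `I ∉ 𝒳` has size `h`.
-/

theorem List.Pairwise.getElem_le_iff_lt_countP {α : Type*} [LinearOrder α] {l : List α}
    (hl : l.Pairwise (· ≤ ·)) {i : ℕ} (hi : i < l.length) (x : α) :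
    l[i] ≤ x ↔ i < l.countP (· ≤ x) := by
  have hsplit : l = l.take i ++ l[i] :: l.drop (i + 1) := by
    rw [List.getElem_cons_drop, List.take_append_drop]
  have hl' := hsplit ▸ hl
  rw [List.pairwise_append, List.pairwise_cons] at hl'
  obtain ⟨-, ⟨hright, -⟩, hleft⟩ := hl'
  have htake : (l.take i).length = i := by simp [hi.le]
  conv_rhs => rw [hsplit, List.countP_append, List.countP_cons]
  constructor
  · intro hx
    have hall : (l.take i).countP (· ≤ x) = i := by
      conv_rhs => rw [← htake]
      rw [List.countP_eq_length]
      exact fun a ha => decide_eq_true ((hleft a ha _ List.mem_cons_self).trans hx)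
    simp [hall, hx]
  · intro hcount
    by_contra! hx
    have hnone : (l.drop (i + 1)).countP (· ≤ x) = 0 :=
      List.countP_eq_zero.2 fun b hb => by simpa using hx.trans_le (hright b hb)
    have := (l.take i).countP_le_length (p := (· ≤ x))
    simp only [hnone, hx.not_ge, decide_false, Bool.false_eq_true, ↓reduceIte, add_zero] at hcount
    omega

section OrderStatistics

variable {m : ℕ} (p : Fin m → ℝ)

lemma length_sort_map (J : Finset (Fin m)) :
    ((J.val.map p).sort (· ≤ ·)).length = J.card := by
  rw [Multiset.length_sort, Multiset.card_map, Finset.card_val]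

lemma pOrd_eq_getElem (J : Finset (Fin m)) {i : ℕ} (hi1 : 1 ≤ i) (hiJ : i ≤ J.card) :
    pOrd p J i = ((J.val.map p).sort (· ≤ ·))[i - 1]'(by rw [length_sort_map]; omega) := by
  rw [pOrd, List.getD_eq_getElem]

lemma pOrd_le_iff (J : Finset (Fin m)) {i : ℕ} (hi1 : 1 ≤ i) (hiJ : i ≤ J.card) (x : ℝ) :
    pOrd p J i ≤ x ↔ i ≤ #{a ∈ J | p a ≤ x} := by
  have hcount : ((J.val.map p).sort (· ≤ ·)).countP (· ≤ x) = #{a ∈ J | p a ≤ x} := by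
    rw [← Multiset.coe_countP, Multiset.sort_eq, Multiset.countP_map]
    rfl
  rw [pOrd_eq_getElem p J hi1 hiJ,
    (Multiset.pairwise_sort _ _).getElem_le_iff_lt_countP, hcount]
  omega

lemma pOrd_mem_image (J : Finset (Fin m)) {i : ℕ} (hi1 : 1 ≤ i) (hiJ : i ≤ J.card) :
    pOrd p J i ∈ J.image p := by
  have hmem := List.getElem_mem (l := (J.val.map p).sort (· ≤ ·)) (n := i - 1)
    (by rw [length_sort_map]; omega)
  rw [← pOrd_eq_getElem p J hi1 hiJ, Multiset.mem_sort, Multiset.mem_map] at hmem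
  simpa using hmem

lemma pOrd_le_pOrd_of_forall_le {J K : Finset (Fin m)} (hK : ∀ a ∉ K, ∀ b ∈ K, p a ≤ p b)
    (hcard : J.card = K.card) {i : ℕ} (hi1 : 1 ≤ i) (hiK : i ≤ K.card) :
    pOrd p J i ≤ pOrd p K i := by
  set x := pOrd p K i
  -- All of `Kᶜ` has p-values `≤ x`, and `J` misses only `#Jᶜ = #Kᶜ` indices.
  obtain ⟨b, hb, hbx⟩ := Finset.mem_image.1 (pOrd_mem_image p K hi1 hiK)
  have hKx : i ≤ #{a ∈ K | p a ≤ x} := (pOrd_le_iff p K hi1 hiK x).1 le_rfl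
  have hKc : #{a ∈ Kᶜ | p a ≤ x} = #Kᶜ :=
    congrArg card (filter_true_of_mem fun a ha => (hK a (mem_compl.1 ha) b hb).trans hbx.le)
  have hsplit (s : Finset (Fin m)) :
      #{a ∈ s | p a ≤ x} + #{a ∈ sᶜ | p a ≤ x} = #{a | p a ≤ x} := by
    rw [← card_union_of_disjoint (disjoint_filter_filter disjoint_compl_right), ← filter_union,
      union_compl]
  have hJc : #{a ∈ Jᶜ | p a ≤ x} ≤ #Jᶜ := card_filter_le _ _
  have hcompl : #Jᶜ = #Kᶜ := by rw [card_compl, card_compl, hcard]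
  rw [pOrd_le_iff p J hi1 (hcard ▸ hiK)]
  have := hsplit J
  have := hsplit K
  omega

lemma not_simesU_of_forall_le (α : ℝ) {J K : Finset (Fin m)}
    (hK : ∀ a ∉ K, ∀ b ∈ K, p a ≤ p b) (hcard : J.card = K.card) (hJ : ¬ SimesU α p J) :
    ¬ SimesU α p K := by
  rintro ⟨i, hi1, hiK, hrej⟩
  refine hJ ⟨i, hi1, hcard ▸ hiK, ?_⟩
  calc (J.card : ℝ) * pOrd p J i ≤ K.card * pOrd p K i := by
        rw [hcard]; gcongr; exact pOrd_le_pOrd_of_forall_le p hK hcard hi1 hiK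
    _ ≤ i * α := hrej

end OrderStatistics

section TopSets

variable {m : ℕ} {r : Fin m → Fin m}

lemma card_Kset (hr : Function.Injective r) {s : ℕ} (hs : s ≤ m) : (Kset r s).card = s := by
  have hsplit := card_filter_add_card_filter_not (s := (univ : Finset (Fin m)))
    fun j : Fin m => (j : ℕ) < m - s
  simp only [not_lt, Fin.card_filter_val_lt, card_univ, Fintype.card_fin] at hsplit
  rw [Kset, card_image_of_injective _ hr]
  omega

lemma le_of_notMem_Kset (hr : Function.Surjective r) {p : Fin m → ℝ}
    (hmono : ∀ i j : Fin m, i ≤ j → p (r i) ≤ p (r j)) {s : ℕ} :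
    ∀ a ∉ Kset r s, ∀ b ∈ Kset r s, p a ≤ p b := by
  intro a ha b hb
  obtain ⟨i, rfl⟩ := hr a
  obtain ⟨j, hj, rfl⟩ := mem_image.1 hb
  have hi : (i : ℕ) < m - s := by
    by_contra! hi
    exact ha (mem_image_of_mem r (by simpa using hi))
  have hj' := (mem_filter.1 hj).2
  exact hmono i j (Fin.le_def.2 (by omega))

end TopSets

section ClosedTesting

variable {m : ℕ} {α : ℝ} {p : Fin m → ℝ} {r : Fin m → Fin m}

lemma hval_spec (hr : Function.Injective r) :
    hval α p r ≤ m ∧ ¬ SimesU α p (Kset r (hval α p r)) := by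
  show hval α p r ∈ {i | i ≤ m ∧ ¬ SimesU α p (Kset r i)}
  refine Nat.sSup_mem ⟨0, Nat.zero_le m, ?_⟩ ⟨m, fun _ hi => hi.1⟩
  rintro ⟨i, hi1, hi0, -⟩
  rw [card_Kset hr (Nat.zero_le m)] at hi0
  omega

lemma card_le_hval (hr : Function.Bijective r)
    (hmono : ∀ i j : Fin m, i ≤ j → p (r i) ≤ p (r j)) {J : Finset (Fin m)}
    (hJ : ¬ SimesU α p J) : J.card ≤ hval α p r := by
  have hJm : J.card ≤ m := by simpa using card_le_univ J
  refine le_csSup ⟨m, fun _ hi => hi.1⟩ ⟨hJm, ?_⟩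
  exact not_simesU_of_forall_le p α (le_of_notMem_Kset hr.2 hmono)
    (card_Kset hr.1 hJm).symm hJ

end ClosedTesting

theorem stmt1_general
    (m : ℕ) (α : ℝ)
    (p : Fin m → ℝ)
    (r : Fin m → Fin m) (hr : Function.Bijective r)
    (hmono : ∀ i j : Fin m, i ≤ j → p (r i) ≤ p (r j)) :
    tval α p Finset.univ = hval α p r := by
  obtain ⟨hhm, hK⟩ := hval_spec (α := α) (p := p) hr.1
  have hKX : ¬ ClosedX α p (Kset r (hval α p r)) := fun hX => hK (hX _ subset_rfl)
  have hbdd : BddAbove {k | ∃ I, I ⊆ univ ∧ ¬ ClosedX α p I ∧ I.card = k} :=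
    ⟨m, by rintro _ ⟨I, -, -, rfl⟩; simpa using card_le_univ I⟩
  apply le_antisymm
  · refine csSup_le ⟨_, _, subset_univ _, hKX, rfl⟩ ?_
    rintro _ ⟨I, -, hI, rfl⟩
    obtain ⟨J, hIJ, hJ⟩ : ∃ J, I ⊆ J ∧ ¬ SimesU α p J := by
      simpa [ClosedX] using hI
    exact (card_le_card hIJ).trans (card_le_hval hr hmono hJ)
  · exact (card_Kset hr.1 hhm).symm.le.trans
      (le_csSup hbdd ⟨_, subset_univ _, hKX, rfl⟩)

theorem stmt1
    (m : ℕ) (hm : 1 ≤ m) (α : ℝ) (hα : 0 ≤ α ∧ α ≤ 1)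
    (p : Fin m → ℝ) (hp : ∀ i, 0 ≤ p i ∧ p i ≤ 1)
    (r : Fin m → Fin m) (hr : Function.Bijective r)
    (hmono : ∀ i j : Fin m, i ≤ j → p (r i) ≤ p (r j)) :
    tval α p Finset.univ = hval α p r :=
  stmt1_general m α p r hr hmono
end

section
/- The concentration set is contained in the Benjamini–Hochberg rejection set at the same level: Z ⊆ B_α, i.e., z ≤ b_α. -/
open Finset

attribute [local instance] Classical.propDecidable

/-
If `h = m` then `z = 0`. Otherwise the block `K_{h+1}` of the `h+1` largest p-values is rejected
by Simes at some rank `i ≤ h+1`, i.e. `(h+1)·p_{(j)} ≤ i·α` with `j = m-h-1+i` its global rank.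
The same inequality gives `h·p_{(j)} ≤ (j-m+h+1)·α`, so `z ≤ j`, and, since `m·i ≤ j·(h+1)`,
also `m·p_{(j)} ≤ j·α`, so `j ≤ b_α`.
-/

theorem pOrd_map_univ {m n : ℕ} (p : Fin m → ℝ) (e : Fin n ↪ Fin m) (hmono : Monotone (p ∘ e))
    {i : ℕ} (hi : 1 ≤ i) (hin : i ≤ n) :
    pOrd p (univ.map e) i = p (e ⟨i - 1, by omega⟩) := by
  have hsort : ((univ.map e).val.map p).sort (· ≤ ·) = List.ofFn (p ∘ e) := by
    refine List.Perm.eq_of_pairwise' (Multiset.pairwise_sort ..) hmono.sortedLE_ofFn.pairwise ?_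
    rw [← Multiset.coe_eq_coe, Multiset.sort_eq, Finset.map_val, Multiset.map_map,
      Fin.univ_val_map]
  rw [pOrd, hsort, List.getD_eq_getElem _ _ (by simp; omega)]
  simp

def Fin.topEmb {m n : ℕ} (hn : n ≤ m) : Fin n ↪o Fin m :=
  OrderEmbedding.ofStrictMono (fun j => ⟨m - n + j, by omega⟩)
    fun a b hab => Fin.mk_lt_mk.mpr (by simp only [Fin.lt_def] at hab; omega)

@[simp]
theorem Fin.coe_topEmb {m n : ℕ} (hn : n ≤ m) (j : Fin n) : (Fin.topEmb hn j : ℕ) = m - n + j :=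
  rfl

section OrderStatistics

variable {m : ℕ} (p : Fin m → ℝ) {r : Fin m → Fin m}

theorem Kset_eq_map (hr : Function.Injective r) {n : ℕ} (hn : n ≤ m) :
    Kset r n = univ.map ((Fin.topEmb hn).toEmbedding.trans ⟨r, hr⟩) := by
  ext x
  simp only [Kset, mem_image, mem_filter, mem_univ, true_and, mem_map,
    Function.Embedding.trans_apply]
  constructor
  · rintro ⟨a, ha, rfl⟩
    exact ⟨⟨a - (m - n), by omega⟩, congrArg r (Fin.ext (by simp; omega))⟩
  · rintro ⟨j, rfl⟩
    exact ⟨Fin.topEmb hn j, by simp, rfl⟩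

theorem Kset_card (hr : Function.Injective r) {n : ℕ} (hn : n ≤ m) : (Kset r n).card = n := by
  simp [Kset_eq_map hr hn]

theorem pOrd_univ (hr : Function.Injective r) (hmono : Monotone (p ∘ r))
    {i : ℕ} (hi : 1 ≤ i) (him : i ≤ m) : pOrd p univ i = p (r ⟨i - 1, by omega⟩) := by
  have huniv : univ.map ⟨r, hr⟩ = univ := eq_univ_of_card _ (by simp)
  rw [← huniv]
  exact pOrd_map_univ p ⟨r, hr⟩ hmono hi him

theorem pOrd_Kset (hr : Function.Injective r) (hmono : Monotone (p ∘ r)) {n i : ℕ} (hn : n ≤ m)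
    (hi : 1 ≤ i) (hin : i ≤ n) : pOrd p (Kset r n) i = pOrd p univ (m - n + i) := by
  rw [Kset_eq_map hr hn, pOrd_map_univ p ((Fin.topEmb hn).toEmbedding.trans ⟨r, hr⟩)
    (hmono.comp (Fin.topEmb hn).monotone) hi hin,
    pOrd_univ p hr hmono (by omega) (by omega)]
  exact congrArg (p ∘ r) (Fin.ext (by simp; omega))

end OrderStatistics

theorem Lset_mono {m : ℕ} (r : Fin m → Fin m) {a b : ℕ} (hab : a ≤ b) : Lset r a ⊆ Lset r b :=
  image_subset_image fun x => by simp only [mem_filter, mem_univ, true_and]; omega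

section Procedures

variable {m : ℕ} (α : ℝ) (p : Fin m → ℝ) (r : Fin m → Fin m)

theorem hval_le : hval α p r ≤ m :=
  csSup_le' fun _ hi => hi.1

theorem simesU_Kset_hval_succ (hlt : hval α p r < m) : SimesU α p (Kset r (hval α p r + 1)) := by
  by_contra hnot
  have : hval α p r + 1 ≤ hval α p r := le_csSup ⟨m, fun _ hi => hi.1⟩ ⟨hlt, hnot⟩
  omega

theorem zval_le {j : ℕ} (hne : hval α p r ≠ m) (hj : m - hval α p r ≤ j) (hjm : j ≤ m)
    (hineq : (hval α p r : ℝ) * pOrd p univ j ≤ ((j : ℝ) - m + hval α p r + 1) * α) :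
    zval α p r ≤ j := by
  rw [zval, if_neg hne]
  exact Nat.sInf_le ⟨hj, hjm, hineq⟩

theorem le_bval {j : ℕ} (hj : 1 ≤ j) (hjm : j ≤ m)
    (hineq : (m : ℝ) * pOrd p univ j ≤ (j : ℝ) * α) : j ≤ bval α p :=
  le_csSup ⟨m, fun _ hi => hi.2.1⟩ ⟨hj, hjm, hineq⟩

end Procedures

theorem stmt10_general
    (m : ℕ) (α : ℝ) (hα : 0 ≤ α ∧ α ≤ 1)
    (p : Fin m → ℝ)
    (r : Fin m → Fin m) (hr : Function.Bijective r)
    (hmono : ∀ i j : Fin m, i ≤ j → p (r i) ≤ p (r j)) :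
    zval α p r ≤ bval α p ∧ Lset r (zval α p r) ⊆ Lset r (bval α p) := by
  suffices hzb : zval α p r ≤ bval α p from ⟨hzb, Lset_mono r hzb⟩
  set h := hval α p r
  rcases (hval_le α p r).eq_or_lt with hhm | hlt
  · simp [zval, hhm]
  obtain ⟨i, hi, hik, hsimes⟩ := simesU_Kset_hval_succ α p r hlt
  have hmono' : Monotone (p ∘ r) := fun a b hab => hmono a b hab
  rw [Kset_card hr.injective hlt] at hik hsimes
  rw [pOrd_Kset p hr.injective hmono' hlt hi hik] at hsimes
  set j := m - (h + 1) + i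
  set P := pOrd p univ j
  have hjR : (j : ℝ) = m - (h + 1) + i := by
    simp only [j]
    push_cast [Nat.cast_sub (show h + 1 ≤ m from hlt)]
    ring
  have hsimes' : ((h : ℝ) + 1) * P ≤ i * α := by exact_mod_cast hsimes
  have hikR : (i : ℝ) ≤ h + 1 := by exact_mod_cast hik
  have hmR : (h : ℝ) + 1 ≤ m := by exact_mod_cast hlt
  calc zval α p r ≤ j := zval_le α p r hlt.ne (by omega) (by omega) (by
        rw [hjR]
        -- `h·P ≤ (h+1)·P` if `P ≥ 0`, and `h·P ≤ 0 ≤ i·α` otherwise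
        rcases le_total 0 P with hP | hP <;> nlinarith [Nat.cast_nonneg (α := ℝ) i])
    _ ≤ bval α p := le_bval α p (by omega) (by omega) (by
        rw [hjR]
        nlinarith [mul_le_mul_of_nonneg_right hikR (sub_nonneg.mpr hmR)])

theorem stmt10
    (m : ℕ) (hm : 1 ≤ m) (α : ℝ) (hα : 0 ≤ α ∧ α ≤ 1)
    (p : Fin m → ℝ) (hp : ∀ i, 0 ≤ p i ∧ p i ≤ 1)
    (r : Fin m → Fin m) (hr : Function.Bijective r)
    (hmono : ∀ i j : Fin m, i ≤ j → p (r i) ≤ p (r j)) :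
    zval α p r ≤ bval α p ∧ Lset r (zval α p r) ⊆ Lset r (bval α p) :=
  stmt10_general m α hα p r hr hmono
end
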